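/- arXiv:2603.18638 — 3 statements merged into one kernel-verified Lean document; each statement's English description precedes it below -/
import Mathlib

section
/- Let p,q ≥ 3 be integers with (p-2)(q-2) > 4 and let β be the larger root of (p-2)x² - (p-2)(q-2)x + (q-2) = 0. If p = 3 then ⌊β⌋ = q - 4, and if p > 3 then ⌊β⌋ = q - 3. -/
/-!
Write `a = p - 2`, `b = q - 2` and `s = √(a²b² - 4ab)`, so that `β = (ab + s) / (2a)`.
Since `s < ab`, always `β < b`. For `a = 1` the bounds `b - 4 ≤ s < b - 2`
(squared: `16 ≤ 4b` and `0 < 4`) put `β` in `[b - 2, b - 1)`. For `a ≥ 2` the bound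
`ab - 2a ≤ s` (trivial for `b ≤ 2`, otherwise squared: `a + b ≤ ab`) puts `β` in `[b - 1, b)`.
-/

open Real

noncomputable def largerRoot (a b : ℝ) : ℝ :=
  (a * b + √(a ^ 2 * b ^ 2 - 4 * a * b)) / (2 * a)

lemma largerRoot_lt {a b : ℝ} (ha : 0 < a) (hb : 0 < b) : largerRoot a b < b := by
  have hs : √(a ^ 2 * b ^ 2 - 4 * a * b) < a * b :=
    (sqrt_lt' (by positivity)).2 (by nlinarith [mul_pos ha hb])
  rw [largerRoot, div_lt_iff₀ (by positivity)]
  linarith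

lemma sub_one_le_largerRoot {a b : ℝ} (ha : 2 ≤ a) : b - 1 ≤ largerRoot a b := by
  have hs : a * b - 2 * a ≤ √(a ^ 2 * b ^ 2 - 4 * a * b) := by
    rcases le_or_gt b 2 with hb2 | hb2
    · exact le_trans (by nlinarith) (sqrt_nonneg _)
    · exact le_sqrt_of_sq_le (by nlinarith [mul_le_mul ha hb2.le zero_le_two (by linarith)])
  rw [largerRoot, le_div_iff₀ (by positivity)]
  linarith

lemma largerRoot_one_mem_Ico {b : ℝ} (hb : 4 < b) :
    largerRoot 1 b ∈ Set.Ico (b - 2) (b - 1) := by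
  have hlow : b - 4 ≤ √(b ^ 2 - 4 * b) := le_sqrt_of_sq_le (by nlinarith)
  have hupp : √(b ^ 2 - 4 * b) < b - 2 := (sqrt_lt' (by linarith)).2 (by nlinarith)
  simp only [largerRoot, one_pow, one_mul, mul_one]
  constructor <;> linarith

lemma floor_largerRoot_one {n : ℤ} (hn : 4 < n) : ⌊largerRoot 1 n⌋ = n - 2 := by
  obtain ⟨hlow, hupp⟩ := largerRoot_one_mem_Ico (b := n) (by exact_mod_cast hn)
  rw [Int.floor_eq_iff]
  push_cast
  constructor <;> linarith

lemma floor_largerRoot {a : ℝ} {n : ℤ} (ha : 2 ≤ a) (hn : 0 < n) : ⌊largerRoot a n⌋ = n - 1 := by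
  have hn' : (0 : ℝ) < n := by exact_mod_cast hn
  have hlow := sub_one_le_largerRoot (b := n) ha
  have hupp := largerRoot_lt (a := a) (by linarith) hn'
  rw [Int.floor_eq_iff]
  push_cast
  constructor <;> linarith

theorem stmt_1_general (p q : ℕ)
    (hhyp : 4 < ((p : ℝ) - 2) * ((q : ℝ) - 2))
    (β : ℝ)
    (hβ : β = (((p : ℝ) - 2) * ((q : ℝ) - 2) +
        Real.sqrt (((p : ℝ) - 2) ^ 2 * ((q : ℝ) - 2) ^ 2 -
          4 * ((p : ℝ) - 2) * ((q : ℝ) - 2))) / (2 * ((p : ℝ) - 2))) :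
    (p = 3 → ⌊β⌋ = (q : ℤ) - 4) ∧ (3 < p → ⌊β⌋ = (q : ℤ) - 3) := by
  have hβ' : β = largerRoot ((p : ℝ) - 2) (((q : ℤ) - 2 : ℤ) : ℝ) := by
    rw [hβ, largerRoot]
    push_cast
    ring
  constructor
  · rintro rfl
    have hq4 : 4 < (q : ℤ) - 2 := by
      have : (4 : ℝ) < (q : ℝ) - 2 := by norm_num at hhyp; exact hhyp
      exact_mod_cast this
    rw [hβ', show ((3 : ℕ) : ℝ) - 2 = 1 by norm_num, floor_largerRoot_one hq4]
    ring
  · intro hp3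
    have ha : (2 : ℝ) ≤ (p : ℝ) - 2 := by
      have : (4 : ℝ) ≤ p := by exact_mod_cast hp3
      linarith
    have hq2 : 0 < (q : ℤ) - 2 := by
      have hprod : (0 : ℝ) < ((p : ℝ) - 2) * ((q : ℝ) - 2) := by linarith
      have : (0 : ℝ) < (q : ℝ) - 2 := (pos_iff_pos_of_mul_pos hprod).1 (by linarith)
      exact_mod_cast this
    rw [hβ', floor_largerRoot ha hq2]
    ring

/-- For a hyperbolic {p,q}-tessellation, the floor of β (the larger root of
(p-2)x² - (p-2)(q-2)x + (q-2) = 0) equals q-4 when p = 3 and q-3 when p > 3. -/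
theorem stmt_1 (p q : ℕ) (hp : 3 ≤ p) (hq : 3 ≤ q)
    (hhyp : 4 < ((p : ℝ) - 2) * ((q : ℝ) - 2))
    (β : ℝ)
    (hβ : β = (((p : ℝ) - 2) * ((q : ℝ) - 2) +
        Real.sqrt (((p : ℝ) - 2) ^ 2 * ((q : ℝ) - 2) ^ 2 -
          4 * ((p : ℝ) - 2) * ((q : ℝ) - 2))) / (2 * ((p : ℝ) - 2))) :
    (p = 3 → ⌊β⌋ = (q : ℤ) - 4) ∧ (3 < p → ⌊β⌋ = (q : ℤ) - 3) :=
  stmt_1_general p q hhyp β hβ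
end

section
/- Let p,q ≥ 3 with q > 3 and define P_min(N) = p + (p-2)(N-1) for 1 ≤ N < q, P_min(N) = p + (p-2)(N-1) - 2⌊(N-2)/(q-2)⌋ for q ≤ N ≤ p(q-2), and P_min(p(q-2)+1) = p(p-2)(q-2) - p. Then for M(n,h) = (n(p-2) + 2 - P_min(n+h))/p and any integers n ≥ 1, h ≥ 2 with n + h ≤ p(q-2)+1, one has M(n,h) < 2 ≤ h. -/
/-!
Multiplying by `p`, the claim is `n(p-2) + 2 - P_min(n+h) < 2p`. Against the tree-like perimeter
`p + (p-2)(N-1)` the left side equals `4 - 2p - (p-2)(h-2) ≤ 4 - 2p`. In the middle range the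
correction `2⌊(N-2)/(q-2)⌋` is at most `2(p-1)` because `N ≤ p(q-2)`, so the left side is at most
`2`. At `N = p(q-2)+1` the bound `n ≤ p(q-2) - 1` (from `h ≥ 2`) gives at most `4`. Each is `< 2p`.
-/

namespace Polyform

theorem excess_over_linear_perimeter_le {p n h : ℤ} (hp : 2 ≤ p) (hh : 2 ≤ h) :
    n * (p - 2) + 2 - (p + (p - 2) * (n + h - 1)) ≤ 4 - 2 * p := by
  nlinarith

theorem ediv_sub_two_le_pred {N p m : ℤ} (hm : 0 < m) (hN : N ≤ p * m) :
    (N - 2) / m ≤ p - 1 := by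
  have : (N - 2) / m < p := Int.ediv_lt_of_lt_mul hm (by linarith)
  omega

theorem excess_at_top_lt {p m n : ℤ} (hp : 3 ≤ p) (hn : n + 2 ≤ p * m + 1) :
    n * (p - 2) + 2 - (p * (p - 2) * m - p) < 2 * p := by
  nlinarith

end Polyform

open Polyform in
theorem stmt_6_general (p q : ℕ) (hp : 3 ≤ p) (Pmin : ℕ → ℤ)
    (hP1 : ∀ N : ℕ, 1 ≤ N → N < q → Pmin N = (p : ℤ) + ((p : ℤ) - 2) * ((N : ℤ) - 1))
    (hP2 : ∀ N : ℕ, q ≤ N → N ≤ p * (q - 2) →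
      Pmin N = (p : ℤ) + ((p : ℤ) - 2) * ((N : ℤ) - 1) - 2 * (((N : ℤ) - 2) / ((q : ℤ) - 2)))
    (hP3 : Pmin (p * (q - 2) + 1) = (p : ℤ) * ((p : ℤ) - 2) * ((q : ℤ) - 2) - (p : ℤ))
    (n h : ℕ) (hh : 2 ≤ h) (hrange : n + h ≤ p * (q - 2) + 1) :
    ((n : ℚ) * ((p : ℚ) - 2) + 2 - (Pmin (n + h) : ℚ)) / p < 2 ∧ (2 : ℚ) ≤ (h : ℚ) := by
  have hq : 2 < q := by
    by_contra! hq
    rw [Nat.sub_eq_zero_of_le hq, mul_zero] at hrange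
    omega
  have hlin := excess_over_linear_perimeter_le (n := n) (by omega : (2 : ℤ) ≤ p)
    (by exact_mod_cast hh : (2 : ℤ) ≤ h)
  have key : (n : ℤ) * (p - 2) + 2 - Pmin (n + h) < 2 * p := by
    rcases lt_or_ge (n + h) q with hlow | hmid
    · rw [hP1 _ (by omega) hlow]
      push_cast
      omega
    rcases hrange.lt_or_eq with hlt | htop
    · have hN : (n : ℤ) + h ≤ p * ((q : ℤ) - 2) := by
        zify [hq.le] at hlt
        omega
      have hfloor := ediv_sub_two_le_pred (by omega) hN
      rw [hP2 _ hmid (by omega)]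
      push_cast
      omega
    · rw [htop, hP3]
      zify [hq.le] at hrange
      exact excess_at_top_lt (by exact_mod_cast hp) (by omega)
  refine ⟨?_, by exact_mod_cast hh⟩
  rw [div_lt_iff₀ (by positivity)]
  exact_mod_cast key

/-- With the explicit minimal-perimeter formula P_min for N ≤ p(q-2)+1, the
hole-bound function M(n,h) = (n(p-2)+2-P_min(n+h))/p satisfies M(n,h) < 2 ≤ h
whenever h ≥ 2 and n + h ≤ p(q-2)+1; hence no such polyform exists. -/
theorem stmt_6 (p q : ℕ) (hp : 3 ≤ p) (hq : 3 < q) (Pmin : ℕ → ℤ)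
    (hP1 : ∀ N : ℕ, 1 ≤ N → N < q → Pmin N = (p : ℤ) + ((p : ℤ) - 2) * ((N : ℤ) - 1))
    (hP2 : ∀ N : ℕ, q ≤ N → N ≤ p * (q - 2) →
      Pmin N = (p : ℤ) + ((p : ℤ) - 2) * ((N : ℤ) - 1) - 2 * (((N : ℤ) - 2) / ((q : ℤ) - 2)))
    (hP3 : Pmin (p * (q - 2) + 1) = (p : ℤ) * ((p : ℤ) - 2) * ((q : ℤ) - 2) - (p : ℤ))
    (n h : ℕ) (hn : 1 ≤ n) (hh : 2 ≤ h) (hrange : n + h ≤ p * (q - 2) + 1) :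
    ((n : ℚ) * ((p : ℚ) - 2) + 2 - (Pmin (n + h) : ℚ)) / p < 2 ∧ (2 : ℚ) ≤ (h : ℚ) :=
  stmt_6_general p q hp Pmin hP1 hP2 hP3 n h hh hrange
end

section
/- Let p,q ≥ 3 with q > 3 and (p-2)(q-2) > 4, let β be the larger root of (p-2)x² - (p-2)(q-2)x + (q-2) = 0, and let h ≥ 2, g be positive reals. Suppose h·p ≤ g(p-2) - (p - 2 - 2/β)(g + h). Then β(p - 1 - 1/β)·h ≤ g. -/
/-! Multiplying the hypothesis by `β > 0` cancels the `g·(p-2)` terms and leaves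
`β p h ≤ 2(g + h) - β (p-2) h`, which rearranges to `(β p - β - 1) h ≤ g`. -/

lemma le_of_mul_le_sub_mul {β p g h : ℝ} (hβ : 0 < β)
    (hineq : h * p ≤ g * (p - 2) - (p - 2 - 2 / β) * (g + h)) :
    β * (p - 1 - 1 / β) * h ≤ g := by
  have hscaled : β * (h * p) ≤ 2 * (g + h) - β * (p - 2) * h := by
    calc β * (h * p) ≤ β * (g * (p - 2) - (p - 2 - 2 / β) * (g + h)) :=
          mul_le_mul_of_nonneg_left hineq hβ.le
      _ = 2 * (g + h) - β * (p - 2) * h := by field_simp; ring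
  have hlhs : β * (p - 1 - 1 / β) * h = (β * p - β - 1) * h := by field_simp
  rw [hlhs]
  linarith

theorem stmt_12_general (p q : ℕ) (hp : 3 ≤ p)
    (hhyp : 4 < ((p : ℝ) - 2) * ((q : ℝ) - 2))
    (β : ℝ)
    (hβ : β = (((p : ℝ) - 2) * ((q : ℝ) - 2) +
        Real.sqrt (((p : ℝ) - 2) ^ 2 * ((q : ℝ) - 2) ^ 2 -
          4 * ((p : ℝ) - 2) * ((q : ℝ) - 2))) / (2 * ((p : ℝ) - 2)))
    (h g : ℝ)
    (hineq : h * p ≤ g * ((p : ℝ) - 2) - ((p : ℝ) - 2 - 2 / β) * (g + h)) :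
    β * ((p : ℝ) - 1 - 1 / β) * h ≤ g := by
  have hp2 : (0 : ℝ) < p - 2 := by
    have : (3 : ℝ) ≤ p := by exact_mod_cast hp
    linarith
  have hβpos : 0 < β := by
    rw [hβ]
    have : 0 < ((p : ℝ) - 2) * ((q : ℝ) - 2) := by linarith
    positivity
  exact le_of_mul_le_sub_mul hβpos hineq

/-- Algebraic core of the lower bound of Theorem 1.6: if
h·p ≤ g(p-2) - (p-2-2/β)(g+h) with β the larger root of
(p-2)x² - (p-2)(q-2)x + (q-2) = 0, then β(p-1-1/β)·h ≤ g. -/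
theorem stmt_12 (p q : ℕ) (hp : 3 ≤ p) (hq : 3 < q)
    (hhyp : 4 < ((p : ℝ) - 2) * ((q : ℝ) - 2))
    (β : ℝ)
    (hβ : β = (((p : ℝ) - 2) * ((q : ℝ) - 2) +
        Real.sqrt (((p : ℝ) - 2) ^ 2 * ((q : ℝ) - 2) ^ 2 -
          4 * ((p : ℝ) - 2) * ((q : ℝ) - 2))) / (2 * ((p : ℝ) - 2)))
    (h g : ℝ) (hh : 2 ≤ h) (hg : 0 < g)
    (hineq : h * p ≤ g * ((p : ℝ) - 2) - ((p : ℝ) - 2 - 2 / β) * (g + h)) :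
    β * ((p : ℝ) - 1 - 1 / β) * h ≤ g :=
  stmt_12_general p q hp hhyp β hβ h g hineq
end
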